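/- For every integer n ≥ 0, the determinant of the (n+1)×(n+1) matrix M_n with entries m_{i,j} = C(2j+1, i) − δ_{2j+1,i} for 0 ≤ i,j ≤ n equals the double factorial (2n+1)!! = 1·3·5⋯(2n+1). In particular M_n is invertible for every n. -/

import Mathlib

/-!
Write `(1 + X)^(2j+1) - X^(2j+1) = g_j(X(1 + X))` with `g_j` of degree `j` and leading coefficient
`2j + 1`; such `g_j` exist because the left side is invariant under `X ↦ -1 - X`. Expanding the
composition factors `M_n = L * U`, where the columns of `L` are the coefficients of the powers
`(X(1 + X))^k`, so `L` is lower unitriangular, and the columns of `U` are the coefficients of the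
`g_j`, so `U` is upper triangular with diagonal `1, 3, …, 2n + 1`.
-/

open Finset

namespace Polynomial

variable {R : Type*} [CommRing R]

/-- The recursion is the Lucas recurrence for the two roots `(1 + X)²` and `X²` of
`T² - (1 + 2Y) T + Y²`, where `Y = X(1 + X)`. -/
noncomputable def oddPowDiff : ℕ → R[X]
  | 0 => 1
  | 1 => 1 + 3 * X
  | j + 2 => (1 + 2 * X) * oddPowDiff (j + 1) - X ^ 2 * oddPowDiff j

theorem oddPowDiff_add_two (j : ℕ) :
    (oddPowDiff (j + 2) : R[X]) = (1 + 2 * X) * oddPowDiff (j + 1) - X ^ 2 * oddPowDiff j :=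
  rfl

theorem oddPowDiff_comp (j : ℕ) :
    (oddPowDiff j : R[X]).comp (X * (1 + X)) = (1 + X) ^ (2 * j + 1) - X ^ (2 * j + 1) := by
  induction j using Nat.twoStepInduction with
  | zero => simp [oddPowDiff]
  | one => simp [oddPowDiff]; ring
  | more j ih₀ ih₁ =>
    simp only [oddPowDiff_add_two, sub_comp, mul_comp, ih₀, ih₁, add_comp, one_comp,
      ofNat_comp, X_comp, X_pow_comp]
    ring

theorem natDegree_oddPowDiff_le (j : ℕ) : (oddPowDiff j : R[X]).natDegree ≤ j := by
  induction j using Nat.twoStepInduction with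
  | zero => simp [oddPowDiff]
  | one => simp only [oddPowDiff]; compute_degree!
  | more j ih₀ ih₁ =>
    rw [oddPowDiff_add_two]
    refine (natDegree_sub_le _ _).trans (max_le ?_ ?_)
    · refine natDegree_mul_le.trans ?_
      have : (1 + 2 * X : R[X]).natDegree ≤ 1 := by compute_degree
      omega
    · have : (X ^ 2 : R[X]).natDegree ≤ 2 := natDegree_X_pow_le 2
      exact natDegree_mul_le.trans (by omega)

theorem coeff_oddPowDiff_self (j : ℕ) : (oddPowDiff j : R[X]).coeff j = 2 * j + 1 := by
  induction j using Nat.twoStepInduction with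
  | zero => simp [oddPowDiff]
  | one => simp [oddPowDiff, coeff_one]; norm_num
  | more j ih₀ ih₁ =>
    have hlt : (oddPowDiff (j + 1) : R[X]).coeff (j + 2) = 0 :=
      coeff_eq_zero_of_natDegree_lt ((natDegree_oddPowDiff_le _).trans_lt (by omega))
    rw [oddPowDiff_add_two, coeff_sub, add_mul, one_mul, coeff_add, hlt, mul_assoc,
      ← C_ofNat, coeff_C_mul, coeff_X_mul, coeff_X_pow_mul, ih₀, ih₁]
    push_cast
    ring

theorem coeff_comp_eq_sum_range {p : R[X]} {n : ℕ} (hp : p.natDegree < n) (q : R[X]) (i : ℕ) :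
    (p.comp q).coeff i = ∑ k ∈ range n, (q ^ k).coeff i * p.coeff k := by
  rw [comp_eq_sum_left, sum_over_range' _ (by simp) n hp, finsetSum_coeff]
  exact sum_congr rfl fun k _ => by rw [coeff_C_mul, mul_comm]

end Polynomial

namespace Matrix

open Polynomial

variable {R : Type*} [CommRing R]

noncomputable def polyCoeff (p : ℕ → R[X]) (n : ℕ) : Matrix (Fin n) (Fin n) R :=
  of fun i j => (p j).coeff i

theorem polyCoeff_comp {p : ℕ → R[X]} {n : ℕ} (hp : ∀ j < n, (p j).natDegree < n) (q : R[X]) :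
    polyCoeff (fun j => (p j).comp q) n = polyCoeff (q ^ ·) n * polyCoeff p n := by
  ext i j
  simp only [polyCoeff, of_apply, mul_apply]
  rw [coeff_comp_eq_sum_range (hp j j.isLt), ← Fin.sum_univ_eq_sum_range]

theorem det_polyCoeff_of_natDegree_le {p : ℕ → R[X]} (hp : ∀ j, (p j).natDegree ≤ j) (n : ℕ) :
    (polyCoeff p n).det = ∏ j : Fin n, (p j).coeff j := by
  refine det_of_isUpperTriangular fun i j (hji : j < i) => ?_
  exact coeff_eq_zero_of_natDegree_lt ((hp j).trans_lt hji)

theorem det_polyCoeff_X_mul_pow (r : R[X]) (n : ℕ) :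
    (polyCoeff ((X * r) ^ ·) n).det = ∏ k : Fin n, r.coeff 0 ^ (k : ℕ) := by
  have hcoeff (i k : ℕ) : ((X * r) ^ k).coeff i = if k ≤ i then (r ^ k).coeff (i - k) else 0 := by
    rw [mul_pow, coeff_X_pow_mul']
  rw [det_of_isLowerTriangular _ fun i k (hik : i < k) => ?_]
  · simp [polyCoeff, hcoeff, coeff_zero_eq_eval_zero]
  · rw [polyCoeff, of_apply, hcoeff, if_neg (by omega)]

end Matrix

open Polynomial Matrix in
theorem det_binomial_matrix (n : ℕ) (M : Matrix (Fin (n + 1)) (Fin (n + 1)) ℚ)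
    (hM : ∀ i j : Fin (n + 1),
      M i j = ((2 * (j : ℕ) + 1).choose (i : ℕ) : ℚ) -
        if 2 * (j : ℕ) + 1 = (i : ℕ) then 1 else 0) :
    M.det = Nat.doubleFactorial (2 * n + 1) ∧ IsUnit M := by
  have hfactor : M = polyCoeff ((X * (1 + X)) ^ ·) (n + 1) * polyCoeff oddPowDiff (n + 1) := by
    rw [← polyCoeff_comp fun j hj => (natDegree_oddPowDiff_le j).trans_lt hj]
    ext i j
    simp [polyCoeff, oddPowDiff_comp, hM, coeff_one_add_X_pow, coeff_X_pow, eq_comm]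
  have hdet : M.det = Nat.doubleFactorial (2 * n + 1) := by
    rw [hfactor, det_mul, det_polyCoeff_X_mul_pow,
      det_polyCoeff_of_natDegree_le natDegree_oddPowDiff_le,
      Fin.prod_univ_eq_prod_range (fun j => (oddPowDiff j).coeff j), prod_range_succ',
      Nat.doubleFactorial_eq_prod_odd]
    simp [coeff_oddPowDiff_self]
  refine ⟨hdet, ?_⟩
  rw [isUnit_iff_isUnit_det, hdet, isUnit_iff_ne_zero]
  exact_mod_cast (Nat.doubleFactorial_pos _).ne'
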